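/- arXiv:2011.13531 — 3 statements merged into one kernel-verified Lean document; each statement's English description precedes it below -/
import Mathlib

section
/- The relative category of a map of pairs is a homotopy invariant: if f, g : (B, C) → (X, A) are maps of pairs that are homotopic relative to C (i.e., there is a homotopy H : B × [0,1] → X with H(-,0) = f, H(-,1) = g, and H(C, t) ⊆ A for all t), then relcat(f) = relcat(g). -/
open Set unitInterval

namespace Paper

/-- An open subset `U ⊆ X` is relative categorical for the pair `(X, A)`:
there is a homotopy `H : U × [0,1] → X` with `H(-,1)` the inclusion and `H(U,0) ⊆ A`. -/
def RelCategorical (X : Type) [TopologicalSpace X] (A U : Set X) : Prop :=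
  ∃ H : C(U × I, X), (∀ u : U, H (u, 1) = u) ∧ (∀ u : U, H (u, 0) ∈ A)

/-- Relative category of a pair `(X, A)` (Definition 2.2). -/
noncomputable def relcatPair (X : Type) [TopologicalSpace X] (A : Set X) : ℕ∞ :=
  sInf ((fun k : ℕ => (k : ℕ∞)) ''
    {k : ℕ | ∃ U : Fin (k + 1) → Set X,
      (∀ i, IsOpen (U i)) ∧ (⋃ i, U i) = Set.univ ∧ ∀ i, RelCategorical X A (U i)})

/-- A restriction of a map of pairs `f : (B, C) → (X, A)` to `U ⊆ B` is
relatively inessential. -/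
def RelInessentialOn {B X : Type} [TopologicalSpace B] [TopologicalSpace X]
    (f : C(B, X)) (C : Set B) (A : Set X) (U : Set B) : Prop :=
  ∃ H : C(U × I, X), (∀ u : U, H (u, 1) = f u) ∧ (∀ u : U, H (u, 0) ∈ A) ∧
    ∀ u : U, (u : B) ∈ C → ∀ t : I, H (u, t) ∈ A

/-- Relative category of a map of pairs `f : (B, C) → (X, A)`. -/
noncomputable def relcatMap {B X : Type} [TopologicalSpace B] [TopologicalSpace X]
    (f : C(B, X)) (C : Set B) (A : Set X) : ℕ∞ :=
  sInf ((fun k : ℕ => (k : ℕ∞)) ''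
    {k : ℕ | ∃ U : Fin (k + 1) → Set B,
      (∀ i, IsOpen (U i)) ∧ (⋃ i, U i) = Set.univ ∧ ∀ i, RelInessentialOn f C A (U i)})

/-- `f` is null-homotopic on `U`. -/
def NullhomotopicOn {X Y : Type} [TopologicalSpace X] [TopologicalSpace Y]
    (f : C(X, Y)) (U : Set X) : Prop :=
  ∃ (y : Y) (H : C(U × I, Y)), (∀ u : U, H (u, 1) = f u) ∧ ∀ u : U, H (u, 0) = y

/-- Lusternik–Schnirelmann category of a map (normalized). -/
noncomputable def catMap {X Y : Type} [TopologicalSpace X] [TopologicalSpace Y]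
    (f : C(X, Y)) : ℕ∞ :=
  sInf ((fun k : ℕ => (k : ℕ∞)) ''
    {k : ℕ | ∃ U : Fin (k + 1) → Set X,
      (∀ i, IsOpen (U i)) ∧ (⋃ i, U i) = Set.univ ∧ ∀ i, NullhomotopicOn f (U i)})

/-- Normalized LS category of a space. -/
noncomputable def lsCat (X : Type) [TopologicalSpace X] : ℕ∞ :=
  catMap (ContinuousMap.id X)

/-- The thin diagonal in `X^n`. -/
def diagSet (n : ℕ) (X : Type) : Set (Fin n → X) := {x | ∀ i j, x i = x j}

/-- The `n`-fold power of a map. -/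
def powMap {X Y : Type} [TopologicalSpace X] [TopologicalSpace Y] (n : ℕ)
    (f : C(X, Y)) : C(Fin n → X, Fin n → Y) :=
  ⟨fun x i => f (x i), continuous_pi fun i => f.continuous.comp (continuous_apply i)⟩

/-- Higher topological complexity of a map `f : X → Y`:
`TCₙ(f) = relcat((fⁿ) : (Xⁿ, Δₙ X) → (Yⁿ, Δₙ Y))`. -/
noncomputable def higherTCmap {X Y : Type} [TopologicalSpace X] [TopologicalSpace Y]
    (n : ℕ) (f : C(X, Y)) : ℕ∞ :=
  relcatMap (powMap n f) (diagSet n X) (diagSet n Y)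

/-! A relatively inessential restriction `f|U` is the same thing as a homotopy of maps of pairs
`(U, U ∩ C) → (X, A)` from a map into `A` to `f|U`. Composing it with the restriction to `U` of a
homotopy of maps of pairs from `f` to `g` shows that `g|U` is relatively inessential as well, so
`f` and `g` have the same admissible covers. -/

section

variable {B X : Type} [TopologicalSpace B] [TopologicalSpace X]
  {f g : C(B, X)} {C : Set B} {A : Set X}

/-- A `HomotopyWith` for this predicate is a homotopy of maps of pairs `(B, C) → (X, A)`. -/
def MapsPair (C : Set B) (A : Set X) (h : C(B, X)) : Prop := MapsTo h C A

theorem relInessentialOn_iff_homotopicWith {U : Set B} :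
    RelInessentialOn f C A U ↔ ∃ k : C(U, X), (∀ u, k u ∈ A) ∧
      k.HomotopicWith (f.restrict U) (MapsPair (Subtype.val ⁻¹' C) A) := by
  constructor
  · rintro ⟨K, K_one, K_zero, K_rel⟩
    exact ⟨K.comp ⟨fun u => (u, 0), by fun_prop⟩, K_zero, ⟨{
      toContinuousMap := K.comp ContinuousMap.prodSwap
      map_zero_left := fun _ => rfl
      map_one_left := K_one
      prop' := fun t u hu => K_rel u hu t }⟩⟩
  · rintro ⟨k, hk, ⟨F⟩⟩
    exact ⟨F.toContinuousMap.comp ContinuousMap.prodSwap, F.apply_one,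
      fun u => F.apply_zero u ▸ hk u, fun u hu t => F.prop t hu⟩

theorem _root_.ContinuousMap.HomotopicWith.restrict_mapsPair
    (h : f.HomotopicWith g (MapsPair C A)) (U : Set B) :
    (f.restrict U).HomotopicWith (g.restrict U) (MapsPair (Subtype.val ⁻¹' C) A) := by
  obtain ⟨F⟩ := h
  exact ⟨{ F.toHomotopy.compContinuousMap ⟨Subtype.val, continuous_subtype_val⟩ with
    prop' := fun t => (F.prop t).comp (mapsTo_preimage Subtype.val C) }⟩

theorem RelInessentialOn.of_homotopicWith {U : Set B} (h : f.HomotopicWith g (MapsPair C A))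
    (hf : RelInessentialOn f C A U) : RelInessentialOn g C A U := by
  obtain ⟨k, hk, hkf⟩ := relInessentialOn_iff_homotopicWith.mp hf
  exact relInessentialOn_iff_homotopicWith.mpr ⟨k, hk, hkf.trans (h.restrict_mapsPair U)⟩

theorem relcatMap_congr (h : ∀ U, RelInessentialOn f C A U ↔ RelInessentialOn g C A U) :
    relcatMap f C A = relcatMap g C A := by
  simp only [relcatMap, h]

theorem relcatMap_eq_of_homotopicWith (h : f.HomotopicWith g (MapsPair C A)) :
    relcatMap f C A = relcatMap g C A :=
  relcatMap_congr fun _ => ⟨.of_homotopicWith h, .of_homotopicWith h.symm⟩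

end

theorem relcatMap_homotopy_invariant_general {B X : Type} [TopologicalSpace B] [TopologicalSpace X]
    (f g : C(B, X)) (C : Set B) (A : Set X)
    (H : C(B × I, X)) (H0 : ∀ b, H (b, 0) = f b) (H1 : ∀ b, H (b, 1) = g b)
    (HC : ∀ c ∈ C, ∀ t : I, H (c, t) ∈ A) :
    relcatMap f C A = relcatMap g C A :=
  relcatMap_eq_of_homotopicWith ⟨{
    toContinuousMap := H.comp ContinuousMap.prodSwap
    map_zero_left := H0
    map_one_left := H1
    prop' := fun t _ hc => HC _ hc t }⟩

/-- relcat of a map of pairs is invariant under homotopy rel `C`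
(as maps of pairs into `(X, A)`). -/
theorem relcatMap_homotopy_invariant {B X : Type} [TopologicalSpace B] [TopologicalSpace X]
    (f g : C(B, X)) (C : Set B) (A : Set X)
    (hf : Set.MapsTo f C A) (hg : Set.MapsTo g C A)
    (H : C(B × I, X)) (H0 : ∀ b, H (b, 0) = f b) (H1 : ∀ b, H (b, 1) = g b)
    (HC : ∀ c ∈ C, ∀ t : I, H (c, t) ∈ A) :
    relcatMap f C A = relcatMap g C A :=
  relcatMap_homotopy_invariant_general f g C A H H0 H1 HC

end Paper
end

section
/- For maps of pairs f : (B,C) → (X,A) and g : (Y,D) → (B,C), the composite satisfies relcat(f ∘ g) ≤ min(relcat(f), relcat(g)). -/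
open Set unitInterval

namespace Paper

section RelInessential

variable {Y B X : Type} [TopologicalSpace Y] [TopologicalSpace B] [TopologicalSpace X]

theorem RelInessentialOn.precomp {f : C(B, X)} {C : Set B} {A : Set X} {U : Set B}
    (hU : RelInessentialOn f C A U) {g : C(Y, B)} {D : Set Y} (hg : MapsTo g D C) :
    RelInessentialOn (f.comp g) D A (g ⁻¹' U) := by
  obtain ⟨H, h1, h0, hC⟩ := hU
  exact ⟨H.comp ((g.restrictPreimage U).prodMap (ContinuousMap.id I)),
    fun u => h1 ⟨g u, u.2⟩, fun u => h0 ⟨g u, u.2⟩, fun u hu t => hC ⟨g u, u.2⟩ (hg hu) t⟩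

theorem RelInessentialOn.postcomp {g : C(Y, B)} {D : Set Y} {C : Set B} {U : Set Y}
    (hU : RelInessentialOn g D C U) {f : C(B, X)} {A : Set X} (hf : MapsTo f C A) :
    RelInessentialOn (f.comp g) D A U := by
  obtain ⟨H, h1, h0, hD⟩ := hU
  exact ⟨f.comp H, fun u => congrArg f (h1 u), fun u => hf (h0 u),
    fun u hu t => hf (hD u hu t)⟩

theorem relcatMap_le_of_preimage {B' X' : Type} [TopologicalSpace B'] [TopologicalSpace X']
    {f : C(B, X)} {C : Set B} {A : Set X} {f' : C(B', X')} {C' : Set B'} {A' : Set X'}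
    (φ : C(B', B))
    (h : ∀ U, RelInessentialOn f C A U → RelInessentialOn f' C' A' (φ ⁻¹' U)) :
    relcatMap f' C' A' ≤ relcatMap f C A := by
  refine sInf_le_sInf (image_mono ?_)
  rintro k ⟨U, hopen, hcov, hiness⟩
  refine ⟨fun i => φ ⁻¹' U i, fun i => (hopen i).preimage φ.continuous, ?_,
    fun i => h _ (hiness i)⟩
  rw [← preimage_iUnion, hcov, preimage_univ]

end RelInessential

/-- `relcat(f ∘ g) ≤ min(relcat f, relcat g)` for maps of pairs
`g : (Y, D) → (B, C)` and `f : (B, C) → (X, A)`. -/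
theorem relcatMap_comp_le {Y B X : Type}
    [TopologicalSpace Y] [TopologicalSpace B] [TopologicalSpace X]
    (f : C(B, X)) (g : C(Y, B)) (D : Set Y) (C : Set B) (A : Set X)
    (hg : Set.MapsTo g D C) (hf : Set.MapsTo f C A) :
    relcatMap (f.comp g) D A ≤ min (relcatMap f C A) (relcatMap g D C) :=
  le_min (relcatMap_le_of_preimage g fun _ hU => hU.precomp hg)
    (relcatMap_le_of_preimage (ContinuousMap.id Y) fun _ hU => hU.postcomp hf)

end Paper
end

section
/- TC_n(f) is a homotopy invariant: if f, g : X → Y are homotopic maps between path-connected spaces, then TC_n(f) = TC_n(g) for every n ≥ 2. -/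
open Set unitInterval

namespace Paper

/-! A homotopy `H : f ≃ g` induces the homotopy `Hⁿ : fⁿ ≃ gⁿ`, which keeps the diagonal inside the
diagonal at all times. Concatenating `Hⁿ` (or its reverse) with a homotopy witnessing that `fⁿ`
(or `gⁿ`) is relatively inessential on an open set gives one for the other map, so both maps
admit the same open covers. -/

section HomotopyOfPairs

variable {B X : Type} [TopologicalSpace B] [TopologicalSpace X] {f₁ f₂ : C(B, X)}
  {C : Set B} {A : Set X}

theorem RelInessentialOn.of_homotopy (G : f₁.Homotopy f₂) (hG : ∀ b ∈ C, ∀ t : I, G (t, b) ∈ A)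
    {U : Set B} (h : RelInessentialOn f₁ C A U) : RelInessentialOn f₂ C A U := by
  obtain ⟨H, hH₁, hH₀, hHC⟩ := h
  let ι : C(U, B) := ⟨Subtype.val, continuous_subtype_val⟩
  let H' : ContinuousMap.Homotopy (H.comp ⟨fun u => (u, 0), by fun_prop⟩) (f₁.comp ι) :=
    { toContinuousMap := H.comp ContinuousMap.prodSwap
      map_zero_left := fun _ => rfl
      map_one_left := hH₁ }
  let K := H'.trans (G.compContinuousMap ι)
  refine ⟨K.toContinuousMap.comp .prodSwap, fun u => ?_, fun u => ?_, fun u hu t => ?_⟩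
  · exact K.apply_one u
  · simpa [K] using hH₀ u
  · change K (t, u) ∈ A
    rw [ContinuousMap.Homotopy.trans_apply]
    split_ifs
    · exact hHC u hu _
    · exact hG u hu _

theorem relcatMap_eq_of_homotopy (G : f₁.Homotopy f₂) (hG : ∀ b ∈ C, ∀ t : I, G (t, b) ∈ A) :
    relcatMap f₁ C A = relcatMap f₂ C A := by
  have hG' : ∀ b ∈ C, ∀ t : I, G.symm (t, b) ∈ A := fun b hb t => hG b hb _
  unfold relcatMap
  congr! 6
  exact and_congr_right' <| and_congr_right' <| forall_congr' fun _ =>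
    ⟨RelInessentialOn.of_homotopy G hG, RelInessentialOn.of_homotopy G.symm hG'⟩

end HomotopyOfPairs

theorem higherTCmap_homotopy_invariant_general {X Y : Type} [TopologicalSpace X] [TopologicalSpace Y]
    (n : ℕ) (f g : C(X, Y)) (h : f.Homotopic g) :
    higherTCmap n f = higherTCmap n g := by
  obtain ⟨H⟩ := h
  -- `powMap n f` is definitionally `ContinuousMap.piMap fun _ => f`.
  let Hₙ : (powMap n f).Homotopy (powMap n g) := ContinuousMap.Homotopy.piMap fun _ => H
  refine relcatMap_eq_of_homotopy Hₙ fun x hx t i j => ?_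
  change H (t, x i) = H (t, x j)
  rw [hx i j]

/-- `TCₙ` of a map is a homotopy invariant. -/
theorem higherTCmap_homotopy_invariant {X Y : Type} [TopologicalSpace X] [TopologicalSpace Y]
    [PathConnectedSpace X] [PathConnectedSpace Y]
    (n : ℕ) (hn : 2 ≤ n) (f g : C(X, Y)) (h : f.Homotopic g) :
    higherTCmap n f = higherTCmap n g :=
  higherTCmap_homotopy_invariant_general n f g h

end Paper
end
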